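/- Define E2 : ℕ → ℕ → ℕ → ℝ → ℝ by E2 a h 0 q = 0; for a > h, E2 a h (n+1) q = max ((h+1) - q + E2 (a-h-1) 0 n q) (q * E2 (a+1) h n q + (1-q) * (E2 a (h+1) n q - q)); for a ≤ h, E2 a h (n+1) q = max (E2 0 0 n q) (q * E2 (a+1) h n q + (1-q) * (E2 a (h+1) n q - q)). Then for all a h n and q ∈ [0,1], E2 a h n q ≥ E3 a h n q, where E3 is the same recursion with Crush reward (h+1)*(1-q) instead of (h+1)-q. -/
import Mathlib


noncomputable def E2 : ℕ → ℕ → ℕ → ℝ → ℝ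
  | _, _, 0, _ => 0
  | a, h, n + 1, q =>
    if a > h then
      max (((h : ℝ) + 1) - q + E2 (a - h - 1) 0 n q)
        (q * E2 (a + 1) h n q + (1 - q) * (E2 a (h + 1) n q - q))
    else
      max (E2 0 0 n q)
        (q * E2 (a + 1) h n q + (1 - q) * (E2 a (h + 1) n q - q))

noncomputable def E3 : ℕ → ℕ → ℕ → ℝ → ℝ
  | _, _, 0, _ => 0
  | a, h, n + 1, q =>
    if a > h then
      max (((h : ℝ) + 1) * (1 - q) + E3 (a - h - 1) 0 n q)
        (q * E3 (a + 1) h n q + (1 - q) * (E3 a (h + 1) n q - q))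
    else
      max (E3 0 0 n q)
        (q * E3 (a + 1) h n q + (1 - q) * (E3 a (h + 1) n q - q))

theorem E2_ge_E3 (a h n : ℕ) (q : ℝ) (hq0 : 0 ≤ q) (hq1 : q ≤ 1) :
    E3 a h n q ≤ E2 a h n q := by
  induction n generalizing a h with
  | zero => simp [E2, E3]
  | succ n ih =>
    rw [E2, E3]
    split
    · apply max_le_max
      · have : ((h : ℝ) + 1) * (1 - q) ≤ ((h : ℝ) + 1) - q := by
          have : 0 ≤ (h : ℝ) * q := by positivity
          nlinarith
        have := ih (a - h - 1) 0
        linarith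
      · have h1 := ih (a + 1) h
        have h2 := ih a (h + 1)
        nlinarith
    · apply max_le_max
      · exact ih 0 0
      · have h1 := ih (a + 1) h
        have h2 := ih a (h + 1)
        nlinarith
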